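/- Let 𝒢 be a periodic evolving graph with period Γ, emulated graph G(𝒢), and extended path set P* = static(𝒫⁰), and let M be a demand matrix. If ℱ : 𝒫* → ℝ≥0 is a legal temporal flow in 𝒢 achieving throughput θ for M, then the flow F defined by F(static(δ)) = ((1−Δu)/Γ)·ℱ(δ) for all δ ∈ 𝒫⁰ is a legal flow on P* in the emulated graph G(𝒢) achieving throughput θ for M. -/

import Mathlib

open scoped ENNReal NNReal BigOperators

namespace RDCN

/-- A directed edge. -/
abbrev Edge (V : Type*) := V × V
/-- A temporal path (or a labelled-edge path): a list of edge/time(label) pairs. -/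
abbrev TPath (V : Type*) := List (Edge V × ℕ)
/-- An extended path in the emulated graph: a labelled-edge path together with its
unique identifier (a temporal path). -/
abbrev ExtPath (V : Type*) := TPath V × TPath V

variable {V : Type*}

/-- The vertex sequence of a list of directed edges. -/
def pathVerts (es : List (Edge V)) : List V :=
  match es with
  | [] => []
  | e :: _ => e.1 :: es.map Prod.snd

/-- A nonempty list of directed edges forming a directed path visiting pairwise
distinct vertices. -/
def IsSimpleEdgePath (es : List (Edge V)) : Prop :=
  es ≠ [] ∧ es.Chain' (fun e e' => e.2 = e'.1) ∧ (pathVerts es).Nodup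

/-- `es` is a path from `s` to `d`. -/
def EndpointsOf (es : List (Edge V)) (s d : V) : Prop :=
  es.head?.map Prod.fst = some s ∧ es.getLast?.map Prod.snd = some d

/-- A periodic evolving graph with period `Γ`, timeslot duration `Δ` and
reconfiguration fraction `Δu`. -/
structure PEG (V : Type*) where
  Γ : ℕ
  Γ_pos : 1 ≤ Γ
  E : ℕ → Set (V × V)
  E_periodic : ∀ t, E (t + Γ) = E t
  c : ℕ → V × V → ℝ≥0
  c_periodic : ∀ t e, c (t + Γ) e = c t e
  c_zero : ∀ t e, e ∉ E t → c t e = 0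
  Δ : ℝ≥0
  Δ_pos : 0 < Δ
  Δu : ℝ≥0
  Δu_lt_one : Δu < 1

/-- A legal temporal path in the periodic evolving graph `G`. -/
def IsTemporalPath (G : PEG V) (δ : TPath V) : Prop :=
  δ ≠ [] ∧ (∀ x ∈ δ, x.1 ∈ G.E x.2) ∧
    δ.Chain' (fun x y => x.2 < y.2 ∧ y.2 ≤ x.2 + G.Γ) ∧
    IsSimpleEdgePath (δ.map Prod.fst)

/-- The foundation set `𝒫⁰`: legal temporal paths starting in the first period. -/
def Foundation (G : PEG V) : Set (TPath V) :=
  {δ | IsTemporalPath G δ ∧ ∀ t₀ : ℕ, δ.head?.map Prod.snd = some t₀ → t₀ < G.Γ}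

/-- The temporal path `δ` goes from `s` to `d`. -/
def TEndpoints (δ : TPath V) (s d : V) : Prop :=
  EndpointsOf (δ.map Prod.fst) s d

/-- `𝒫⁰_{s,d}`. -/
def FoundationSD (G : PEG V) (s d : V) : Set (TPath V) :=
  {δ | δ ∈ Foundation G ∧ TEndpoints δ s d}

/-- Shift all times of a temporal path by `k·Γ`. -/
def shiftPath (Γ k : ℕ) (δ : TPath V) : TPath V :=
  δ.map fun x => (x.1, x.2 + k * Γ)

/-- `𝒫*`: all periodic shifts of foundation paths. -/
def PStar (G : PEG V) : Set (TPath V) :=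
  {δ' | ∃ δ ∈ Foundation G, ∃ k : ℕ, δ' = shiftPath G.Γ k δ}

/-- `𝒫*_{s,d}`. -/
def PStarSD (G : PEG V) (s d : V) : Set (TPath V) :=
  {δ | δ ∈ PStar G ∧ TEndpoints δ s d}

/-- A legal temporal flow: nonnegative (enforced by `ℝ≥0`), invariant under
shifting a path's times by `Γ`, and obeying the capacity constraints at all times. -/
structure IsLegalTemporalFlow (G : PEG V) (F : TPath V → ℝ≥0) : Prop where
  periodic : ∀ δ ∈ PStar G, F (shiftPath G.Γ 1 δ) = F δ
  capacity : ∀ (e : Edge V) (t : ℕ),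
    ∑' δ : {δ : TPath V // δ ∈ PStar G ∧ (e, t) ∈ δ}, ((F (δ : TPath V) : ℝ≥0) : ℝ≥0∞)
      ≤ (G.c t e : ℝ≥0∞)

/-- The factor `(1-Δu)/Γ`. -/
noncomputable def capFactor (G : PEG V) : ℝ≥0∞ :=
  ((1 - G.Δu : ℝ≥0) : ℝ≥0∞) / (G.Γ : ℝ≥0∞)

/-- The temporal flow `F` achieves throughput `θ` for the demand matrix `m`:
`((1-Δu)/Γ)·Σ_{δ ∈ 𝒫⁰_{s,d}} F(δ) ≥ θ·m_{s,d}` for all `s, d`. -/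
def AchievesThroughputT (G : PEG V) (F : TPath V → ℝ≥0) (m : V → V → ℝ≥0)
    (θ : ℝ≥0∞) : Prop :=
  ∀ s d : V, θ * (m s d : ℝ≥0∞) ≤
    capFactor G * ∑' δ : FoundationSD G s d, ((F (δ : TPath V) : ℝ≥0) : ℝ≥0∞)

/-- Capacity `ĉ(e,ℓ) = ((1-Δu)/Γ)·c_ℓ(e)` of a labelled edge of the emulated graph. -/
noncomputable def chat (G : PEG V) (e : Edge V) (ℓ : ℕ) : ℝ≥0∞ :=
  capFactor G * (G.c ℓ e : ℝ≥0∞)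

/-- The map `static` sending a temporal path `δ = ⟨(eᵢ,tᵢ)⟩` to the extended path
`(⟨(eᵢ, tᵢ mod Γ)⟩, δ)` with `δ` as the unique identifier. -/
def staticOf (Γ : ℕ) (δ : TPath V) : ExtPath V :=
  (δ.map fun x => (x.1, x.2 % Γ), δ)

/-- `P* = static(𝒫⁰)`, the extended path set of the emulated graph. -/
def PStarStatic (G : PEG V) : Set (ExtPath V) :=
  staticOf G.Γ '' Foundation G

/-- The extended path `p` goes from `s` to `d`. -/
def SEndpoints (p : ExtPath V) (s d : V) : Prop :=
  EndpointsOf (p.1.map Prod.fst) s d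

/-- A legal flow on a set `P` of extended paths of the emulated graph: equal on paths
with identical labelled-edge sequences, and obeying the capacity constraints. -/
structure IsLegalStaticFlow (G : PEG V) (P : Set (ExtPath V)) (F : ExtPath V → ℝ≥0) :
    Prop where
  congr : ∀ p ∈ P, ∀ q ∈ P, p.1 = q.1 → F p = F q
  capacity : ∀ (e : Edge V) (ℓ : ℕ), ℓ < G.Γ →
    ∑' p : {p : ExtPath V // p ∈ P ∧ (e, ℓ) ∈ p.1}, ((F (p : ExtPath V) : ℝ≥0) : ℝ≥0∞)
      ≤ chat G e ℓ

/-- The flow `F` on the extended path set `P` achieves throughput `θ` for `m`: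
`Σ_{p ∈ P_{s,d}} F(p) ≥ θ·m_{s,d}` for all `s, d`. -/
def AchievesThroughputS (P : Set (ExtPath V)) (F : ExtPath V → ℝ≥0) (m : V → V → ℝ≥0)
    (θ : ℝ≥0∞) : Prop :=
  ∀ s d : V, θ * (m s d : ℝ≥0∞) ≤
    ∑' p : {p : ExtPath V // p ∈ P ∧ SEndpoints p s d}, ((F (p : ExtPath V) : ℝ≥0) : ℝ≥0∞)

/-- First time of a temporal path. -/
def tStart (δ : TPath V) : ℕ := (δ.head?.map Prod.snd).getD 0
/-- Last time of a temporal path. -/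
def tEnd (δ : TPath V) : ℕ := (δ.getLast?.map Prod.snd).getD 0

/-- The delay `L(δ) = (t_n − t₁ + 1)·Δ + (Γ−1)·Δ` of a temporal path. -/
noncomputable def delay (G : PEG V) (δ : TPath V) : ℝ≥0∞ :=
  ((tEnd δ - tStart δ + 1 : ℕ) : ℝ≥0∞) * (G.Δ : ℝ≥0∞) +
    ((G.Γ - 1 : ℕ) : ℝ≥0∞) * (G.Δ : ℝ≥0∞)

/-- `Σ_{δ ∈ 𝒫⁰_{s,d}} F(δ)`. -/
noncomputable def sdSum (G : PEG V) (F : TPath V → ℝ≥0) (s d : V) : ℝ≥0∞ :=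
  ∑' δ : FoundationSD G s d, ((F (δ : TPath V) : ℝ≥0) : ℝ≥0∞)

/-- `r_δ = F(δ)/Σ_{δ' ∈ 𝒫⁰_{s,d}} F(δ')` (with value `0` when the denominator is `0`,
which holds automatically since then `F(δ) = 0` for `δ ∈ 𝒫⁰_{s,d}`). -/
noncomputable def rfrac (G : PEG V) (F : TPath V → ℝ≥0) (s d : V) (δ : TPath V) : ℝ≥0∞ :=
  ((F δ : ℝ≥0) : ℝ≥0∞) / sdSum G F s d

/-- Total demand `M_tot = Σ_{s,d} m_{s,d}`. -/
noncomputable def Mtot [Fintype V] (m : V → V → ℝ≥0) : ℝ≥0∞ :=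
  ∑ s : V, ∑ d : V, (m s d : ℝ≥0∞)

/-- Average route delay `ARD(M,F) = Σ_{s,d} (m_{s,d}/M_tot)·Σ_{δ ∈ 𝒫⁰_{s,d}} r_δ·L(δ)`. -/
noncomputable def ARD [Fintype V] (G : PEG V) (F : TPath V → ℝ≥0) (m : V → V → ℝ≥0) :
    ℝ≥0∞ :=
  ∑ s : V, ∑ d : V, ((m s d : ℝ≥0∞) / Mtot m) *
    ∑' δ : FoundationSD G s d, rfrac G F s d (δ : TPath V) * delay G (δ : TPath V)

/-- Average route length
`ARL(M,F) = Σ_{s,d} Σ_{δ ∈ 𝒫⁰_{s,d}} (m_{s,d}/M_tot)·r_δ·len(δ)`. -/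
noncomputable def ARLt [Fintype V] (G : PEG V) (F : TPath V → ℝ≥0) (m : V → V → ℝ≥0) :
    ℝ≥0∞ :=
  ∑ s : V, ∑ d : V, ∑' δ : FoundationSD G s d,
    ((m s d : ℝ≥0∞) / Mtot m) * rfrac G F s d (δ : TPath V) * ((δ : TPath V).length : ℝ≥0∞)

/-!
A foundation path starts in the first period and its consecutive times increase by at most `Γ`,
so each time is pinned down by its residue mod `Γ` together with the previous time. Hence
`static` is injective on `𝒫⁰` (already on the labelled-edge component), and `F` is a
well-defined rescaling of `ℱ`. For the capacity of a labelled edge `(e, ℓ)`, every foundation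
path using it, say at time `t ≡ ℓ`, is shifted by a whole number of periods so that it uses
`e` at the fixed time `T = ℓ + |V|·Γ`; this is possible because a simple path has fewer than
`|V|` edges, so `t < |V|·Γ`. The shifted paths are pairwise distinct and carry the same flow,
so their total is bounded by the temporal capacity `c_T(e) = c_ℓ(e)`.
-/

def TimeStep {α : Type*} (Γ : ℕ) (x y : α × ℕ) : Prop :=
  x.2 < y.2 ∧ y.2 ≤ x.2 + Γ

lemma eq_of_modEq_of_mem_Ioc {Γ s x y : ℕ} (hx : x ∈ Set.Ioc s (s + Γ))
    (hy : y ∈ Set.Ioc s (s + Γ)) (h : x ≡ y [MOD Γ]) : x = y := by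
  obtain ⟨x, rfl⟩ : ∃ x', x = x' + (s + 1) := ⟨x - (s + 1), by grind⟩
  obtain ⟨y, rfl⟩ : ∃ y', y = y' + (s + 1) := ⟨y - (s + 1), by grind⟩
  have := (Nat.ModEq.add_right_cancel' (s + 1) h).eq_of_lt_of_lt (by grind) (by grind)
  omega

lemma eq_of_isChain_timeStep {α : Type*} {Γ : ℕ} {a a' : α × ℕ} {l l' : List (α × ℕ)}
    (hc : (a :: l).IsChain (TimeStep Γ)) (hc' : (a' :: l').IsChain (TimeStep Γ))
    (ha : a.2 = a'.2)
    (h : (a :: l).map (fun x => (x.1, x.2 % Γ)) = (a' :: l').map (fun x => (x.1, x.2 % Γ))) :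
    a :: l = a' :: l' := by
  induction l generalizing a a' l' with
  | nil =>
    cases l' with
    | nil => simp_all [Prod.ext_iff]
    | cons => simp at h
  | cons b l ih =>
    cases l' with
    | nil => simp at h
    | cons b' l' =>
      rw [List.isChain_cons_cons] at hc hc'
      simp only [List.map_cons, List.cons.injEq, Prod.mk.injEq] at h ih ⊢
      have hb : b.2 = b'.2 := eq_of_modEq_of_mem_Ioc ⟨hc.1.1, hc.1.2⟩
        ⟨ha ▸ hc'.1.1, ha ▸ hc'.1.2⟩ h.2.1.2
      exact ⟨Prod.ext h.1.1 ha, ih hc.2 hc'.2 hb h.2⟩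

lemma snd_le_of_isChain_timeStep {α : Type*} {Γ : ℕ} {a : α × ℕ} {l : List (α × ℕ)}
    (hc : (a :: l).IsChain (TimeStep Γ)) {x : α × ℕ} (hx : x ∈ a :: l) :
    x.2 ≤ a.2 + l.length * Γ := by
  induction l generalizing a with
  | nil => simp_all
  | cons b l ih =>
    rw [List.isChain_cons_cons] at hc
    rcases List.mem_cons.mp hx with rfl | hx
    · exact Nat.le_add_right _ _
    · have := ih hc.2 hx
      have := hc.1.2
      rw [List.length_cons, Nat.succ_mul]
      omega

lemma shiftPath_shiftPath (Γ a b : ℕ) (δ : TPath V) :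
    shiftPath Γ a (shiftPath Γ b δ) = shiftPath Γ (a + b) δ := by
  simp only [shiftPath, List.map_map, Function.comp_def, add_mul, add_assoc, add_comm (b * Γ)]

lemma shiftPath_zero (Γ : ℕ) (δ : TPath V) : shiftPath Γ 0 δ = δ := by
  simp [shiftPath]

lemma staticOf_shiftPath_fst (Γ k : ℕ) (δ : TPath V) :
    (staticOf Γ (shiftPath Γ k δ)).1 = (staticOf Γ δ).1 := by
  simp [staticOf, shiftPath, Function.comp_def]

lemma staticOf_fst_map_fst (Γ : ℕ) (δ : TPath V) :
    (staticOf Γ δ).1.map Prod.fst = δ.map Prod.fst := by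
  simp [staticOf, Function.comp_def]

lemma PEG.c_add_mul (G : PEG V) (t k : ℕ) (e : Edge V) : G.c (t + k * G.Γ) e = G.c t e := by
  induction k with
  | zero => simp
  | succ k ih => rw [Nat.succ_mul, ← add_assoc, G.c_periodic, ih]

lemma PEG.coe_capFactor (G : PEG V) :
    ((((1 - G.Δu) / (G.Γ : ℝ≥0)) : ℝ≥0) : ℝ≥0∞) = capFactor G := by
  rw [ENNReal.coe_div (Nat.cast_ne_zero.mpr (by have := G.Γ_pos; omega)), capFactor]
  norm_cast

lemma shiftPath_mem_PStar {G : PEG V} {δ : TPath V} (h : δ ∈ PStar G) (k : ℕ) :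
    shiftPath G.Γ k δ ∈ PStar G := by
  obtain ⟨δ₀, h₀, j, rfl⟩ := h
  exact ⟨δ₀, h₀, k + j, shiftPath_shiftPath _ _ _ _⟩

lemma mem_PStar_of_mem_Foundation {G : PEG V} {δ : TPath V} (h : δ ∈ Foundation G) :
    δ ∈ PStar G :=
  ⟨δ, h, 0, (shiftPath_zero _ _).symm⟩

lemma IsLegalTemporalFlow.apply_shiftPath {G : PEG V} {ℱ : TPath V → ℝ≥0}
    (hℱ : IsLegalTemporalFlow G ℱ) {δ : TPath V} (h : δ ∈ PStar G) (k : ℕ) :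
    ℱ (shiftPath G.Γ k δ) = ℱ δ := by
  induction k with
  | zero => rw [shiftPath_zero]
  | succ k ih =>
    rw [add_comm, ← shiftPath_shiftPath, hℱ.periodic _ (shiftPath_mem_PStar h k), ih]

lemma exists_eq_cons_of_mem_Foundation {G : PEG V} {δ : TPath V} (h : δ ∈ Foundation G) :
    ∃ a l, δ = a :: l ∧ a.2 < G.Γ ∧ (a :: l).IsChain (TimeStep G.Γ) := by
  obtain ⟨⟨hne, -, hchain, -⟩, hstart⟩ := h
  obtain ⟨a, l, rfl⟩ := List.exists_cons_of_ne_nil hne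
  exact ⟨a, l, rfl, hstart a.2 rfl, hchain⟩

lemma length_lt_card_of_mem_Foundation [Fintype V] {G : PEG V} {δ : TPath V}
    (h : δ ∈ Foundation G) : δ.length < Fintype.card V := by
  obtain ⟨⟨hne, -, -, -, -, hnodup⟩, -⟩ := h
  obtain ⟨a, l, rfl⟩ := List.exists_cons_of_ne_nil hne
  simpa [pathVerts] using hnodup.length_le_card

lemma snd_lt_of_mem_Foundation [Fintype V] {G : PEG V} {δ : TPath V}
    (h : δ ∈ Foundation G) {x : Edge V × ℕ} (hx : x ∈ δ) :
    x.2 < Fintype.card V * G.Γ := by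
  have hlen := length_lt_card_of_mem_Foundation h
  obtain ⟨a, l, rfl, ha, hc⟩ := exists_eq_cons_of_mem_Foundation h
  calc x.2 ≤ a.2 + l.length * G.Γ := snd_le_of_isChain_timeStep hc hx
    _ < (l.length + 1) * G.Γ := by rw [Nat.succ_mul]; omega
    _ ≤ Fintype.card V * G.Γ := Nat.mul_le_mul_right _ hlen.le

lemma eq_of_staticOf_fst_eq {G : PEG V} {δ δ' : TPath V} (h : δ ∈ Foundation G)
    (h' : δ' ∈ Foundation G) (heq : (staticOf G.Γ δ).1 = (staticOf G.Γ δ').1) : δ = δ' := by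
  obtain ⟨a, l, rfl, ha, hc⟩ := exists_eq_cons_of_mem_Foundation h
  obtain ⟨a', l', rfl, ha', hc'⟩ := exists_eq_cons_of_mem_Foundation h'
  refine eq_of_isChain_timeStep hc hc' ?_ heq
  have := congrArg (fun l => (l.head?.map Prod.snd)) heq
  simpa [staticOf, Nat.mod_eq_of_lt ha, Nat.mod_eq_of_lt ha'] using this

lemma eq_of_shiftPath_eq {G : PEG V} {δ δ' : TPath V} (h : δ ∈ Foundation G)
    (h' : δ' ∈ Foundation G) {k k' : ℕ} (heq : shiftPath G.Γ k δ = shiftPath G.Γ k' δ') :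
    δ = δ' :=
  eq_of_staticOf_fst_eq h h' <| by
    rw [← staticOf_shiftPath_fst G.Γ k, heq, staticOf_shiftPath_fst]

lemma exists_shiftPath_mem [Fintype V] {G : PEG V} {δ : TPath V} (hδ : δ ∈ Foundation G)
    {e : Edge V} {ℓ : ℕ} (h : (e, ℓ) ∈ (staticOf G.Γ δ).1) :
    ∃ k, (e, ℓ + Fintype.card V * G.Γ) ∈ shiftPath G.Γ k δ := by
  obtain ⟨x, hx, hxe⟩ := List.mem_map.mp h
  simp only [Prod.mk.injEq] at hxe
  have hdiv : x.2 / G.Γ * G.Γ ≤ Fintype.card V * G.Γ := Nat.mul_le_mul_right _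
    ((Nat.div_lt_iff_lt_mul G.Γ_pos).mpr (snd_lt_of_mem_Foundation hδ hx)).le
  refine ⟨Fintype.card V - x.2 / G.Γ, List.mem_map.mpr ⟨x, hx, Prod.ext hxe.1 ?_⟩⟩
  have := Nat.mod_add_div' x.2 G.Γ
  dsimp only
  rw [Nat.sub_mul]
  omega

lemma staticOf_snd_of_mem_PStarStatic {G : PEG V} {p : ExtPath V} (hp : p ∈ PStarStatic G) :
    staticOf G.Γ p.2 = p := by
  obtain ⟨δ, -, rfl⟩ := hp
  rfl

lemma snd_mem_Foundation_of_mem_PStarStatic {G : PEG V} {p : ExtPath V}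
    (hp : p ∈ PStarStatic G) : p.2 ∈ Foundation G := by
  obtain ⟨δ, hδ, rfl⟩ := hp
  exact hδ

def staticEquiv (G : PEG V) (Q : ExtPath V → Prop) :
    {δ : TPath V // δ ∈ Foundation G ∧ Q (staticOf G.Γ δ)} ≃
      {p : ExtPath V // p ∈ PStarStatic G ∧ Q p} where
  toFun δ := ⟨staticOf G.Γ δ, ⟨δ, δ.2.1, rfl⟩, δ.2.2⟩
  invFun p := ⟨p.1.2, snd_mem_Foundation_of_mem_PStarStatic p.2.1,
    (staticOf_snd_of_mem_PStarStatic p.2.1).symm ▸ p.2.2⟩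
  left_inv _ := rfl
  right_inv p := Subtype.ext (staticOf_snd_of_mem_PStarStatic p.2.1)

section Conversion

variable {G : PEG V} {ℱ : TPath V → ℝ≥0} {F : ExtPath V → ℝ≥0}

lemma tsum_PStarStatic_eq (hF : ∀ δ ∈ Foundation G,
      F (staticOf G.Γ δ) = ((1 - G.Δu) / (G.Γ : ℝ≥0)) * ℱ δ) (Q : ExtPath V → Prop) :
    ∑' p : {p : ExtPath V // p ∈ PStarStatic G ∧ Q p}, ((F p : ℝ≥0) : ℝ≥0∞) =
      capFactor G *
        ∑' δ : {δ : TPath V // δ ∈ Foundation G ∧ Q (staticOf G.Γ δ)}, ((ℱ δ : ℝ≥0) : ℝ≥0∞) := by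
  rw [← (staticEquiv G Q).tsum_eq, ← ENNReal.tsum_mul_left]
  refine tsum_congr fun δ => ?_
  change ((F (staticOf G.Γ δ) : ℝ≥0) : ℝ≥0∞) = _
  rw [hF _ δ.2.1, ENNReal.coe_mul, G.coe_capFactor]

lemma tsum_Foundation_mem_staticOf_le [Fintype V] (hℱ : IsLegalTemporalFlow G ℱ)
    (e : Edge V) (ℓ : ℕ) :
    ∑' δ : {δ : TPath V // δ ∈ Foundation G ∧ (e, ℓ) ∈ (staticOf G.Γ δ).1},
      ((ℱ δ : ℝ≥0) : ℝ≥0∞) ≤ G.c ℓ e := by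
  set T := ℓ + Fintype.card V * G.Γ
  choose k hk using fun δ : {δ : TPath V // δ ∈ Foundation G ∧ (e, ℓ) ∈ (staticOf G.Γ δ).1} =>
    exists_shiftPath_mem δ.2.1 δ.2.2
  let shift (δ : {δ : TPath V // δ ∈ Foundation G ∧ (e, ℓ) ∈ (staticOf G.Γ δ).1}) :
      {δ : TPath V // δ ∈ PStar G ∧ (e, T) ∈ δ} :=
    ⟨shiftPath G.Γ (k δ) δ, shiftPath_mem_PStar (mem_PStar_of_mem_Foundation δ.2.1) _, hk δ⟩
  have hshift : Function.Injective shift := fun δ δ' h =>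
    Subtype.ext (eq_of_shiftPath_eq δ.2.1 δ'.2.1 (congrArg Subtype.val h))
  calc ∑' δ : {δ : TPath V // δ ∈ Foundation G ∧ (e, ℓ) ∈ (staticOf G.Γ δ).1},
        ((ℱ δ : ℝ≥0) : ℝ≥0∞)
      = ∑' δ, ((ℱ (shift δ) : ℝ≥0) : ℝ≥0∞) := tsum_congr fun δ => by
        rw [hℱ.apply_shiftPath (mem_PStar_of_mem_Foundation δ.2.1)]
    _ ≤ ∑' δ : {δ : TPath V // δ ∈ PStar G ∧ (e, T) ∈ δ}, ((ℱ δ : ℝ≥0) : ℝ≥0∞) :=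
      ENNReal.tsum_comp_le_tsum_of_injective hshift _
    _ ≤ G.c T e := hℱ.capacity e T
    _ = G.c ℓ e := by rw [G.c_add_mul]

lemma isLegalStaticFlow_PStarStatic [Fintype V] (hℱ : IsLegalTemporalFlow G ℱ)
    (hF : ∀ δ ∈ Foundation G,
      F (staticOf G.Γ δ) = ((1 - G.Δu) / (G.Γ : ℝ≥0)) * ℱ δ) :
    IsLegalStaticFlow G (PStarStatic G) F where
  congr p hp q hq hpq := by
    rw [← staticOf_snd_of_mem_PStarStatic hp, ← staticOf_snd_of_mem_PStarStatic hq,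
      eq_of_staticOf_fst_eq (snd_mem_Foundation_of_mem_PStarStatic hp)
        (snd_mem_Foundation_of_mem_PStarStatic hq) (by
          rwa [staticOf_snd_of_mem_PStarStatic hp, staticOf_snd_of_mem_PStarStatic hq])]
  capacity e ℓ _ := by
    rw [tsum_PStarStatic_eq hF, chat]
    gcongr
    exact tsum_Foundation_mem_staticOf_le hℱ e ℓ

lemma achievesThroughputS_PStarStatic {m : V → V → ℝ≥0} {θ : ℝ≥0∞}
    (hth : AchievesThroughputT G ℱ m θ)
    (hF : ∀ δ ∈ Foundation G,
      F (staticOf G.Γ δ) = ((1 - G.Δu) / (G.Γ : ℝ≥0)) * ℱ δ) :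
    AchievesThroughputS (PStarStatic G) F m θ := by
  intro s d
  have hsd : ∀ δ : TPath V, (δ ∈ FoundationSD G s d) ↔
      (δ ∈ Foundation G ∧ SEndpoints (staticOf G.Γ δ) s d) := fun δ => by
    rw [SEndpoints, staticOf_fst_map_fst]
    rfl
  rw [tsum_PStarStatic_eq hF, ← (Equiv.subtypeEquivRight hsd).tsum_eq]
  exact hth s d

end Conversion

theorem statement2_general {V : Type*} [Fintype V] (G : PEG V)
    (m : V → V → ℝ≥0) (θ : ℝ≥0∞) (ℱ : TPath V → ℝ≥0)
    (hleg : IsLegalTemporalFlow G ℱ)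
    (hth : AchievesThroughputT G ℱ m θ)
    (F : ExtPath V → ℝ≥0)
    (hF : ∀ δ ∈ Foundation G,
      F (staticOf G.Γ δ) = ((1 - G.Δu) / (G.Γ : ℝ≥0)) * ℱ δ) :
    IsLegalStaticFlow G (PStarStatic G) F ∧
      AchievesThroughputS (PStarStatic G) F m θ :=
  ⟨isLegalStaticFlow_PStarStatic hleg hF, achievesThroughputS_PStarStatic hth hF⟩

/-- Lemma: evolving-to-static conversion.
If `ℱ` is a legal temporal flow in `G` achieving throughput `θ` for `m`, then the flow
`F` defined by `F(static(δ)) = ((1−Δu)/Γ)·ℱ(δ)` for all `δ ∈ 𝒫⁰` is a legal flow on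
`P* = static(𝒫⁰)` in the emulated graph achieving throughput `θ` for `m`. -/
theorem statement2 {V : Type*} [Fintype V] [DecidableEq V] (G : PEG V)
    (m : V → V → ℝ≥0) (θ : ℝ≥0∞) (ℱ : TPath V → ℝ≥0)
    (hleg : IsLegalTemporalFlow G ℱ)
    (hth : AchievesThroughputT G ℱ m θ)
    (F : ExtPath V → ℝ≥0)
    (hF : ∀ δ ∈ Foundation G,
      F (staticOf G.Γ δ) = ((1 - G.Δu) / (G.Γ : ℝ≥0)) * ℱ δ) :
    IsLegalStaticFlow G (PStarStatic G) F ∧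
      AchievesThroughputS (PStarStatic G) F m θ :=
  statement2_general G m θ ℱ hleg hth F hF

end RDCN
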